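/- Let A = Σ{A_{ij} | i,j ∈ I} be the generalized matrix ring of a Γ_I-system. Then \bar r_b(A) = g.m.r_b(A) = r_b(A): the componentwise intersection of all prime g.m.ideals of A equals the largest g.m.ideal N of A all of whose elements are m-nilpotent in the ring N, and both equal the Baer radical of the ring A. -/

import Mathlib

/-!
Generalized matrix rings (g.m.rings) of a `Γ_I`-system, their g.m.ideals,
g.m.homomorphisms, quotients, and the general theory of radicals,
following Zhang, "The Baer radical of generalized matrix rings".
-/

universe u v w

set_option autoImplicit false
set_option maxHeartbeats 1000000

/-- A `Γ_I`-system: a family of additive abelian groups `A i j` (`i j : I`)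
with multiplications `A i j × A j k → A i k`, additive in each variable and
associative. -/
structure GammaSystem (I : Type u) where
  A : I → I → Type v
  [inst : ∀ i j, AddCommGroup (A i j)]
  mul : ∀ {i j k : I}, A i j → A j k → A i k
  add_mul : ∀ {i j k : I} (x y : A i j) (z : A j k), mul (x + y) z = mul x z + mul y z
  mul_add : ∀ {i j k : I} (w : A i j) (x y : A j k), mul w (x + y) = mul w x + mul w y
  mul_assoc : ∀ {l i j k : I} (w : A l i) (x : A i j) (z : A j k),
    mul w (mul x z) = mul (mul w x) z

attribute [instance] GammaSystem.inst

variable {I : Type u}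

/-- The generalized matrix ring `A = Σ{A_{ij} | i,j ∈ I}` of a `Γ_I`-system:
the external direct sum `⨁_{(i,j)} A i j` (finitely supported families). -/
abbrev GMRing (S : GammaSystem I) : Type (max u v) := Π₀ p : I × I, S.A p.1 p.2

namespace GammaSystem

variable (S : GammaSystem I)

lemma zero_mul' {i j k : I} (z : S.A j k) : S.mul (0 : S.A i j) z = 0 := by
  have h := S.add_mul (0 : S.A i j) 0 z
  rw [add_zero] at h
  exact (add_eq_left.mp h.symm)

lemma mul_zero' {i j k : I} (w : S.A i j) : S.mul w (0 : S.A j k) = 0 := by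
  have h := S.mul_add w (0 : S.A j k) 0
  rw [add_zero] at h
  exact (add_eq_left.mp h.symm)

lemma neg_mul' {i j k : I} (x : S.A i j) (z : S.A j k) :
    S.mul (-x) z = -(S.mul x z) := by
  have h := S.add_mul x (-x) z
  rw [add_neg_cancel, S.zero_mul'] at h
  exact (neg_eq_of_add_eq_zero_right h.symm).symm

lemma mul_neg' {i j k : I} (w : S.A i j) (x : S.A j k) :
    S.mul w (-x) = -(S.mul w x) := by
  have h := S.mul_add w x (-x)
  rw [add_neg_cancel, S.mul_zero'] at h
  exact (neg_eq_of_add_eq_zero_right h.symm).symm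

-- Multiplication of generalized matrices: `(x*y)_{ij} = ∑_k x_{ik} y_{kj}`.
open Classical in
noncomputable def gmul (x y : GMRing S) : GMRing S :=
  x.sum fun p a => y.sum fun q b =>
    if h : p.2 = q.1 then
      DFinsupp.single (p.1, q.2)
        (S.mul a (cast (congrArg (fun t => S.A t q.2) h.symm) b))
    else 0

open Classical in
lemma gmul_inner_zero (p : I × I) (a : S.A p.1 p.2) (q : I × I) :
    (if h : p.2 = q.1 then
      DFinsupp.single (p.1, q.2)
        (S.mul a (cast (congrArg (fun t => S.A t q.2) h.symm) (0 : S.A q.1 q.2)))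
    else (0 : GMRing S)) = (0 : GMRing S) := by
  obtain ⟨p1, p2⟩ := p
  obtain ⟨q1, q2⟩ := q
  by_cases h : p2 = q1
  · subst h
    simp [S.mul_zero']
  · simp [h]

open Classical in
lemma gmul_inner_add (p : I × I) (a : S.A p.1 p.2) (q : I × I) (b₁ b₂ : S.A q.1 q.2) :
    (if h : p.2 = q.1 then
      DFinsupp.single (p.1, q.2)
        (S.mul a (cast (congrArg (fun t => S.A t q.2) h.symm) (b₁ + b₂)))
    else (0 : GMRing S)) =
    (if h : p.2 = q.1 then
      DFinsupp.single (p.1, q.2)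
        (S.mul a (cast (congrArg (fun t => S.A t q.2) h.symm) b₁))
    else (0 : GMRing S)) +
    (if h : p.2 = q.1 then
      DFinsupp.single (p.1, q.2)
        (S.mul a (cast (congrArg (fun t => S.A t q.2) h.symm) b₂))
    else (0 : GMRing S)) := by
  obtain ⟨p1, p2⟩ := p
  obtain ⟨q1, q2⟩ := q
  by_cases h : p2 = q1
  · subst h
    simp [S.mul_add, DFinsupp.single_add]
  · simp [h]

open Classical in
lemma gmul_add (x y z : GMRing S) : S.gmul x (y + z) = S.gmul x y + S.gmul x z := by
  unfold gmul
  have : ∀ (p : I × I) (a : S.A p.1 p.2),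
      (y + z).sum (fun q b =>
        if h : p.2 = q.1 then
          DFinsupp.single (p.1, q.2)
            (S.mul a (cast (congrArg (fun t => S.A t q.2) h.symm) b))
        else (0 : GMRing S)) =
      y.sum (fun q b =>
        if h : p.2 = q.1 then
          DFinsupp.single (p.1, q.2)
            (S.mul a (cast (congrArg (fun t => S.A t q.2) h.symm) b))
        else (0 : GMRing S)) +
      z.sum (fun q b =>
        if h : p.2 = q.1 then
          DFinsupp.single (p.1, q.2)
            (S.mul a (cast (congrArg (fun t => S.A t q.2) h.symm) b))
        else (0 : GMRing S)) := by
    intro p a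
    exact DFinsupp.sum_add_index (fun q => S.gmul_inner_zero p a q)
      (fun q b₁ b₂ => S.gmul_inner_add p a q b₁ b₂)
  calc x.sum (fun p a => (y + z).sum fun q b =>
        if h : p.2 = q.1 then
          DFinsupp.single (p.1, q.2)
            (S.mul a (cast (congrArg (fun t => S.A t q.2) h.symm) b))
        else (0 : GMRing S))
      = x.sum (fun p a =>
          (y.sum fun q b =>
            if h : p.2 = q.1 then
              DFinsupp.single (p.1, q.2)
                (S.mul a (cast (congrArg (fun t => S.A t q.2) h.symm) b))
            else (0 : GMRing S)) +
          (z.sum fun q b =>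
            if h : p.2 = q.1 then
              DFinsupp.single (p.1, q.2)
                (S.mul a (cast (congrArg (fun t => S.A t q.2) h.symm) b))
            else (0 : GMRing S))) := by
        exact congrArg (DFinsupp.sum x) (funext fun p => funext fun a => this p a)
    _ = _ := DFinsupp.sum_add

open Classical in
lemma add_gmul (x y z : GMRing S) : S.gmul (x + y) z = S.gmul x z + S.gmul y z := by
  unfold gmul
  refine DFinsupp.sum_add_index (fun p => ?_) (fun p a₁ a₂ => ?_)
  · have : (fun (q : I × I) (b : S.A q.1 q.2) =>
        (if h : p.2 = q.1 then
          DFinsupp.single (p.1, q.2)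
            (S.mul (0 : S.A p.1 p.2) (cast (congrArg (fun t => S.A t q.2) h.symm) b))
        else (0 : GMRing S))) = fun q b => (0 : GMRing S) := by
      funext q b
      obtain ⟨p1, p2⟩ := p
      obtain ⟨q1, q2⟩ := q
      by_cases h : p2 = q1
      · subst h; simp [S.zero_mul']
      · simp [h]
    rw [congrArg (DFinsupp.sum z) this, DFinsupp.sum_zero]
  · have : (fun (q : I × I) (b : S.A q.1 q.2) =>
        (if h : p.2 = q.1 then
          DFinsupp.single (p.1, q.2)
            (S.mul (a₁ + a₂) (cast (congrArg (fun t => S.A t q.2) h.symm) b))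
        else (0 : GMRing S))) = fun q b =>
        (if h : p.2 = q.1 then
          DFinsupp.single (p.1, q.2)
            (S.mul a₁ (cast (congrArg (fun t => S.A t q.2) h.symm) b))
        else (0 : GMRing S)) +
        (if h : p.2 = q.1 then
          DFinsupp.single (p.1, q.2)
            (S.mul a₂ (cast (congrArg (fun t => S.A t q.2) h.symm) b))
        else (0 : GMRing S)) := by
      funext q b
      obtain ⟨p1, p2⟩ := p
      obtain ⟨q1, q2⟩ := q
      by_cases h : p2 = q1
      · subst h; simp [S.add_mul, DFinsupp.single_add]
      · simp [h]
    rw [congrArg (DFinsupp.sum z) this, DFinsupp.sum_add]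

open Classical in
lemma zero_gmul (y : GMRing S) : S.gmul 0 y = 0 := by
  unfold gmul
  exact DFinsupp.sum_zero_index

open Classical in
lemma gmul_zero (x : GMRing S) : S.gmul x 0 = 0 := by
  unfold gmul
  have : (fun (p : I × I) (a : S.A p.1 p.2) =>
      DFinsupp.sum (0 : GMRing S) (fun q b =>
        if h : p.2 = q.1 then
          DFinsupp.single (p.1, q.2)
            (S.mul a (cast (congrArg (fun t => S.A t q.2) h.symm) b))
        else (0 : GMRing S))) = fun p a => (0 : GMRing S) := by
    funext p a
    exact DFinsupp.sum_zero_index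
  rw [congrArg (DFinsupp.sum x) this, DFinsupp.sum_zero]

open Classical in
lemma gmul_single (p : I × I) (a : S.A p.1 p.2) (y : GMRing S) :
    S.gmul (DFinsupp.single p a) y =
      y.sum fun q b =>
        if h : p.2 = q.1 then
          DFinsupp.single (p.1, q.2)
            (S.mul a (cast (congrArg (fun t => S.A t q.2) h.symm) b))
        else 0 := by
  unfold gmul
  refine DFinsupp.sum_single_index ?_
  have : (fun (q : I × I) (b : S.A q.1 q.2) =>
      (if h : p.2 = q.1 then
        DFinsupp.single (p.1, q.2)
          (S.mul (0 : S.A p.1 p.2) (cast (congrArg (fun t => S.A t q.2) h.symm) b))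
      else (0 : GMRing S))) = fun q b => (0 : GMRing S) := by
    funext q b
    obtain ⟨p1, p2⟩ := p; obtain ⟨q1, q2⟩ := q
    by_cases h : p2 = q1
    · subst h; simp [S.zero_mul']
    · simp [h]
  rw [congrArg (DFinsupp.sum y) this, DFinsupp.sum_zero]

open Classical in
lemma gmul_single_single (p q : I × I) (a : S.A p.1 p.2) (b : S.A q.1 q.2) :
    S.gmul (DFinsupp.single p a) (DFinsupp.single q b) =
      if h : p.2 = q.1 then
        DFinsupp.single (p.1, q.2)
          (S.mul a (cast (congrArg (fun t => S.A t q.2) h.symm) b))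
      else 0 := by
  rw [S.gmul_single]
  exact DFinsupp.sum_single_index (S.gmul_inner_zero p a q)

open Classical in
lemma gmul_single_assoc (p q r : I × I) (a : S.A p.1 p.2) (b : S.A q.1 q.2)
    (c : S.A r.1 r.2) :
    S.gmul (S.gmul (DFinsupp.single p a) (DFinsupp.single q b)) (DFinsupp.single r c) =
    S.gmul (DFinsupp.single p a) (S.gmul (DFinsupp.single q b) (DFinsupp.single r c)) := by
  obtain ⟨p1, p2⟩ := p; obtain ⟨q1, q2⟩ := q; obtain ⟨r1, r2⟩ := r
  by_cases h1 : p2 = q1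
  · subst h1
    by_cases h2 : q2 = r1
    · subst h2
      rw [S.gmul_single_single (p1, p2) (p2, q2) a b, dif_pos rfl,
        S.gmul_single_single (p2, q2) (q2, r2) b c, dif_pos rfl,
        S.gmul_single_single (p1, q2) (q2, r2) _ c, dif_pos rfl,
        S.gmul_single_single (p1, p2) (p2, r2) a _, dif_pos rfl]
      show DFinsupp.single (p1, r2) _ = DFinsupp.single (p1, r2) _
      rw [show (cast (congrArg (fun t => S.A t q2) (Eq.symm rfl)) b) = b from rfl,
        show (cast (congrArg (fun t => S.A t r2) (Eq.symm rfl)) c) = c from rfl]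
      exact congrArg _ (S.mul_assoc a b c).symm
    · rw [S.gmul_single_single (p1, p2) (p2, q2) a b, dif_pos rfl,
        S.gmul_single_single (p2, q2) (r1, r2) b c, dif_neg h2,
        S.gmul_single_single (p1, q2) (r1, r2) _ c, dif_neg h2, S.gmul_zero]
  · by_cases h2 : q2 = r1
    · subst h2
      rw [S.gmul_single_single (p1, p2) (q1, q2) a b, dif_neg h1,
        S.gmul_single_single (q1, q2) (q2, r2) b c, dif_pos rfl,
        S.gmul_single_single (p1, p2) (q1, r2) a _, dif_neg h1, S.zero_gmul]
    · rw [S.gmul_single_single (p1, p2) (q1, q2) a b, dif_neg h1,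
        S.gmul_single_single (q1, q2) (r1, r2) b c, dif_neg h2,
        S.zero_gmul, S.gmul_zero]

open Classical in
lemma gmul_single_single_assoc' (p q : I × I) (a : S.A p.1 p.2) (b : S.A q.1 q.2)
    (z : GMRing S) :
    S.gmul (S.gmul (DFinsupp.single p a) (DFinsupp.single q b)) z =
    S.gmul (DFinsupp.single p a) (S.gmul (DFinsupp.single q b) z) := by
  induction z using DFinsupp.induction with
  | h0 => simp only [S.gmul_zero, S.zero_gmul]
  | ha r c f hf hc ih =>
      rw [S.gmul_add, S.gmul_add, S.gmul_add, ih, S.gmul_single_assoc]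

open Classical in
lemma gmul_single_assoc'' (p : I × I) (a : S.A p.1 p.2) (y z : GMRing S) :
    S.gmul (S.gmul (DFinsupp.single p a) y) z =
    S.gmul (DFinsupp.single p a) (S.gmul y z) := by
  induction y using DFinsupp.induction with
  | h0 => simp only [S.gmul_zero, S.zero_gmul]
  | ha q b f hf hb ih =>
      rw [S.gmul_add, S.add_gmul, S.add_gmul, S.gmul_add, ih,
        S.gmul_single_single_assoc']

open Classical in
lemma gmul_assoc (x y z : GMRing S) :
    S.gmul (S.gmul x y) z = S.gmul x (S.gmul y z) := by
  induction x using DFinsupp.induction with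
  | h0 => simp only [S.gmul_zero, S.zero_gmul]
  | ha p a f hf ha ih =>
      rw [S.add_gmul, S.add_gmul, S.add_gmul, ih, S.gmul_single_assoc'']

noncomputable instance : NonUnitalNonAssocRing (GMRing S) :=
  { (inferInstance : AddCommGroup (GMRing S)) with
    mul := S.gmul
    left_distrib := S.gmul_add
    right_distrib := fun x y z => S.add_gmul x y z
    zero_mul := S.zero_gmul
    mul_zero := S.gmul_zero }

/-- The generalized matrix ring is a (possibly non-unital) associative ring. -/
noncomputable instance : NonUnitalRing (GMRing S) :=
  { (inferInstance : NonUnitalNonAssocRing (GMRing S)) with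
    mul_assoc := S.gmul_assoc }

/-- A `Γ_I`-system (g.m.ring) is zero if all its components are zero. -/
def IsZero : Prop := ∀ (i j : I) (x : S.A i j), x = 0

/-- `x ∈ A_{ij}` is `m`-nilpotent in the `A_{ji}`-ring `A_{ij}`: every
`m`-sequence `a_{n+1} = a_n u_n a_n` (`u_n ∈ A_{ji}`) with `a_1 = x`
satisfies `a_k = 0` for some `k`. -/
def MNilpotent (i j : I) (x : S.A i j) : Prop :=
  ∀ a : ℕ → S.A i j, a 0 = x →
    (∀ n, ∃ u : S.A j i, a (n + 1) = S.mul (S.mul (a n) u) (a n)) →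
    ∃ k, a k = 0

/-- The Baer radical `r_b(A_{ij})` of the `A_{ji}`-ring `A_{ij}`: the set of
its `m`-nilpotent elements. -/
def componentBaer (i j : I) : Set (S.A i j) := { x | S.MNilpotent i j x }

end GammaSystem

section RingNotions

variable (R : Type w) [NonUnitalRing R]

/-- A two-sided ideal `P` of a (possibly non-unital) ring is prime if
`BC ⊆ P` implies `B ⊆ P` or `C ⊆ P`. -/
def TwoSidedIdeal.IsPrimeIdeal {R : Type w} [NonUnitalRing R]
    (P : TwoSidedIdeal R) : Prop :=
  ∀ B C : TwoSidedIdeal R, (∀ b ∈ B, ∀ c ∈ C, b * c ∈ P) → B ≤ P ∨ C ≤ P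

/-- The Baer radical of a (possibly non-unital) ring: the intersection of all
prime two-sided ideals. -/
def baerRadical : Set R := { x | ∀ P : TwoSidedIdeal R, P.IsPrimeIdeal → x ∈ P }

/-- `x` is an `m`-nilpotent element of the ring `R`: every `m`-sequence
`a_{n+1} = a_n u_n a_n` (`u_n ∈ R`) with `a_1 = x` reaches `0`. -/
def IsMNilpotent {R : Type w} [NonUnitalRing R] (x : R) : Prop :=
  ∀ a : ℕ → R, a 0 = x → (∀ n, ∃ u : R, a (n + 1) = a n * u * a n) → ∃ k, a k = 0

/-- `x` is `m`-nilpotent in the subring given by the subset `T` of `R`: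
every `m`-sequence lying in `T`, with multipliers `u_n ∈ T`, starting at `x`,
reaches `0`. -/
def IsMNilpotentIn {R : Type w} [NonUnitalRing R] (T : Set R) (x : R) : Prop :=
  ∀ a : ℕ → R, (∀ n, a n ∈ T) → a 0 = x →
    (∀ n, ∃ u ∈ T, a (n + 1) = a n * u * a n) → ∃ k, a k = 0

/-- A ring is prime if `BC = 0` implies `B = 0` or `C = 0` for all two-sided
ideals `B, C`. -/
def IsPrimeRing : Prop :=
  ∀ B C : TwoSidedIdeal R, (∀ b ∈ B, ∀ c ∈ C, b * c = 0) → B = ⊥ ∨ C = ⊥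

/-- A ring is semiprime if `B·B = 0` implies `B = 0` for every two-sided
ideal `B`. -/
def IsSemiprimeRing : Prop :=
  ∀ B : TwoSidedIdeal R, (∀ x ∈ B, ∀ y ∈ B, x * y = 0) → B = ⊥

/-- The annihilator `B* = {x ∈ R | xB = Bx = 0}` of a two-sided ideal. -/
def TwoSidedIdeal.annihilator {R : Type w} [NonUnitalRing R]
    (B : TwoSidedIdeal R) : TwoSidedIdeal R :=
  TwoSidedIdeal.mk' { x | ∀ b ∈ B, x * b = 0 ∧ b * x = 0 }
    (fun b hb => ⟨zero_mul b, mul_zero b⟩)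
    (fun {x y} hx hy b hb =>
      ⟨by rw [add_mul, (hx b hb).1, (hy b hb).1, add_zero],
       by rw [mul_add, (hx b hb).2, (hy b hb).2, add_zero]⟩)
    (fun {x} hx b hb =>
      ⟨by rw [neg_mul, (hx b hb).1, neg_zero],
       by rw [mul_neg, (hx b hb).2, neg_zero]⟩)
    (fun {x y} hy b hb => by
      refine ⟨?_, ?_⟩
      · rw [mul_assoc, (hy b hb).1, mul_zero]
      · rw [← mul_assoc]
        exact (hy (b * x) (B.mul_mem_right b x hb)).2)
    (fun {x y} hx b hb => by
      refine ⟨?_, ?_⟩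
      · rw [mul_assoc]
        exact (hx (y * b) (B.mul_mem_left y b hb)).1
      · rw [← mul_assoc, (hx b hb).2, zero_mul])

end RingNotions

/-- A g.m.ideal of the g.m.ring of `S`: a family of additive subgroups
`B i j ≤ A i j` with `B_{ij} A_{jk} ⊆ B_{ik}` and `A_{ij} B_{jk} ⊆ B_{ik}`. -/
structure GMIdeal (S : GammaSystem I) where
  B : ∀ i j : I, AddSubgroup (S.A i j)
  mul_mem_right : ∀ {i j k : I} (x : S.A i j) (z : S.A j k), x ∈ B i j → S.mul x z ∈ B i k
  mul_mem_left : ∀ {i j k : I} (x : S.A i j) (z : S.A j k), z ∈ B j k → S.mul x z ∈ B i k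

namespace GMIdeal

variable {S : GammaSystem I} (N : GMIdeal S)

/-- The subset of the g.m.ring consisting of the generalized matrices all of
whose components lie in the g.m.ideal `N`. -/
def carrier : Set (GMRing S) := { x | ∀ p : I × I, x p ∈ N.B p.1 p.2 }

/-- A g.m.ideal is zero if all its components are the zero subgroup. -/
def IsZero : Prop := ∀ i j : I, N.B i j = ⊥

/-- A g.m.ideal regarded as a g.m.ring (a `Γ_I`-system) in its own right. -/
def toSystem : GammaSystem I where
  A i j := N.B i j
  inst i j := inferInstance
  mul {i j k} x z := ⟨S.mul x.1 z.1, N.mul_mem_right x.1 z.1 x.2⟩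
  add_mul x y z := Subtype.ext (S.add_mul x.1 y.1 z.1)
  mul_add w x y := Subtype.ext (S.mul_add w.1 x.1 y.1)
  mul_assoc w x z := Subtype.ext (S.mul_assoc w.1 x.1 z.1)

/-- The quotient g.m.ring `A//B`, with components `A_{ij}/B_{ij}`. -/
def quotSystem : GammaSystem I where
  A i j := S.A i j ⧸ N.B i j
  inst i j := inferInstance
  mul {i j k} x z :=
    Quotient.liftOn₂' x z
      (fun a b => ((S.mul a b : S.A i k) : S.A i k ⧸ N.B i k))
      (by
        intro a₁ a₂ b₁ b₂ h₁ h₂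
        replace h₁ := (QuotientAddGroup.leftRel_apply).mp h₁
        replace h₂ := (QuotientAddGroup.leftRel_apply).mp h₂
        refine (QuotientAddGroup.eq).mpr ?_
        have : -(S.mul a₁ a₂) + S.mul b₁ b₂ =
            S.mul (-a₁ + b₁) a₂ + S.mul b₁ (-a₂ + b₂) := by
          rw [S.add_mul, S.mul_add, S.neg_mul', S.mul_neg']
          abel
        rw [this]
        exact add_mem (N.mul_mem_right _ _ h₁) (N.mul_mem_left _ _ h₂))
  add_mul {i j k} x y z := by
    refine Quotient.inductionOn₃' x y z ?_
    intro a b c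
    show ((S.mul (a + b) c : S.A i k) : S.A i k ⧸ N.B i k) = _
    rw [S.add_mul]
    rfl
  mul_add {i j k} w x y := by
    refine Quotient.inductionOn₃' w x y ?_
    intro a b c
    show ((S.mul a (b + c) : S.A i k) : S.A i k ⧸ N.B i k) = _
    rw [S.mul_add]
    rfl
  mul_assoc {l i j k} w x z := by
    refine Quotient.inductionOn₃' w x z ?_
    intro a b c
    show ((S.mul a (S.mul b c) : S.A l k) : S.A l k ⧸ N.B l k) = _
    rw [S.mul_assoc]
    rfl

/-- The annihilator g.m.ideal `B* = {x ∈ A | xB = Bx = 0}` of a g.m.ideal. -/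
def ann : GMIdeal S where
  B i j :=
    { carrier := { x | (∀ (k : I) (b : S.A j k), b ∈ N.B j k → S.mul x b = 0) ∧
        (∀ (k : I) (b : S.A k i), b ∈ N.B k i → S.mul b x = 0) }
      add_mem' := by
        rintro x y ⟨hx₁, hx₂⟩ ⟨hy₁, hy₂⟩
        refine ⟨fun k b hb => ?_, fun k b hb => ?_⟩
        · rw [S.add_mul, hx₁ k b hb, hy₁ k b hb, add_zero]
        · rw [S.mul_add, hx₂ k b hb, hy₂ k b hb, add_zero]
      zero_mem' := ⟨fun k b _ => S.zero_mul' b, fun k b _ => S.mul_zero' b⟩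
      neg_mem' := by
        rintro x ⟨hx₁, hx₂⟩
        refine ⟨fun k b hb => ?_, fun k b hb => ?_⟩
        · rw [S.neg_mul', hx₁ k b hb, neg_zero]
        · rw [S.mul_neg', hx₂ k b hb, neg_zero] }
  mul_mem_right := by
    rintro i j k x z ⟨hx₁, hx₂⟩
    refine ⟨fun m b hb => ?_, fun m b hb => ?_⟩
    · rw [← S.mul_assoc]
      exact hx₁ m (S.mul z b) (N.mul_mem_left z b hb)
    · rw [S.mul_assoc, hx₂ m b hb, S.zero_mul']
  mul_mem_left := by
    rintro i j k x z ⟨hz₁, hz₂⟩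
    refine ⟨fun m b hb => ?_, fun m b hb => ?_⟩
    · rw [← S.mul_assoc, hz₁ m b hb, S.mul_zero']
    · rw [S.mul_assoc]
      exact hz₂ m (S.mul b x) (N.mul_mem_right b x hb)

/-- `N` is a "Baer radical" g.m.ideal: every element of the ring `N` is
`m`-nilpotent in the ring `N`. -/
def IsBaerGMIdeal : Prop := ∀ x ∈ N.carrier, IsMNilpotentIn N.carrier x

end GMIdeal

/-- A g.m.homomorphism between two g.m.rings over the same index set. -/
structure GMHom (S T : GammaSystem I) where
  f : ∀ i j : I, S.A i j → T.A i j
  map_add : ∀ {i j : I} (x y : S.A i j), f i j (x + y) = f i j x + f i j y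
  map_mul : ∀ {i j k : I} (x : S.A i j) (z : S.A j k),
    f i k (S.mul x z) = T.mul (f i j x) (f j k z)

/-- A g.m.homomorphism is surjective if each component map is onto. -/
def GMHom.Surjective {S T : GammaSystem I} (ψ : GMHom S T) : Prop :=
  ∀ i j : I, Function.Surjective (ψ.f i j)

/-- The componentwise intersection `\bar r_b(A)` of all g.m.ideals `B` of `A`
such that the quotient ring `A//B` is a prime ring. -/
def gmBarBaer (S : GammaSystem I) : Set (GMRing S) :=
  { x | ∀ B : GMIdeal S, IsPrimeRing (GMRing B.quotSystem) →
      ∀ p : I × I, x p ∈ B.B p.1 p.2 }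

section RadicalTheory

/-- `N` is the largest g.m.ideal of `S` belonging (as a g.m.ring) to the
class `r`. -/
def IsLargestRadicalIdeal (r : ∀ I₀ : Type u, GammaSystem.{u, v} I₀ → Prop)
    {I : Type u} (S : GammaSystem I) (N : GMIdeal S) : Prop :=
  r I N.toSystem ∧ ∀ M : GMIdeal S, r I M.toSystem → ∀ i j : I, M.B i j ≤ N.B i j

/-- `r` is a radical property of g.m.rings: (R1) closure under surjective
g.m.homomorphic images; (R2) every g.m.ring has a largest `r`-g.m.ideal `r(A)`;
(R3) `A//r(A)` has no non-zero `r`-g.m.ideal. -/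
def IsGMRadicalProperty (r : ∀ I₀ : Type u, GammaSystem.{u, v} I₀ → Prop) : Prop :=
  (∀ (I₀ : Type u) (S T : GammaSystem I₀) (ψ : GMHom S T),
      ψ.Surjective → r I₀ S → r I₀ T) ∧
  (∀ (I₀ : Type u) (S : GammaSystem I₀), ∃ N : GMIdeal S,
      IsLargestRadicalIdeal r S N ∧
      ∀ P : GMIdeal N.quotSystem, r I₀ P.toSystem → P.IsZero)

/-- `S` is `r`-semisimple: `r(S) = 0`, i.e. every `r`-g.m.ideal of `S` is zero. -/
def GMSemisimple (r : ∀ I₀ : Type u, GammaSystem.{u, v} I₀ → Prop)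
    {I : Type u} (S : GammaSystem I) : Prop :=
  ∀ N : GMIdeal S, r I N.toSystem → N.IsZero

/-- `S` can be g.m.homomorphically mapped onto a non-zero member of the
class `K`. -/
def MapsOntoNonzeroMember (K : ∀ I₀ : Type u, GammaSystem.{u, v} I₀ → Prop)
    {I : Type u} (S : GammaSystem I) : Prop :=
  ∃ (T : GammaSystem.{u, v} I) (ψ : GMHom S T),
    ψ.Surjective ∧ ¬ T.IsZero ∧ K I T

/-- Condition (Q1): every non-zero g.m.ideal of any member of `K` can be
g.m.homomorphically mapped onto a non-zero member of `K`. -/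
def Q1Cond (K : ∀ I₀ : Type u, GammaSystem.{u, v} I₀ → Prop) : Prop :=
  ∀ (I₀ : Type u) (S : GammaSystem I₀), K I₀ S →
    ∀ N : GMIdeal S, ¬ N.IsZero → MapsOntoNonzeroMember K N.toSystem

/-- Condition (Q2): if every non-zero g.m.ideal of `A` can be
g.m.homomorphically mapped onto a non-zero member of `K`, then `A ∈ K`. -/
def Q2Cond (K : ∀ I₀ : Type u, GammaSystem.{u, v} I₀ → Prop) : Prop :=
  ∀ (I₀ : Type u) (S : GammaSystem I₀),
    (∀ N : GMIdeal S, ¬ N.IsZero → MapsOntoNonzeroMember K N.toSystem) → K I₀ S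

/-- The radical class of the upper radical `r^K` determined by `K`: the
g.m.rings which cannot be g.m.homomorphically mapped onto a non-zero member
of `K`. -/
def UpperRadicalClass (K : ∀ I₀ : Type u, GammaSystem.{u, v} I₀ → Prop)
    (I : Type u) (S : GammaSystem I) : Prop :=
  ¬ MapsOntoNonzeroMember K S

/-- A g.m.weakly special class: (WS1) every member is a semiprime ring;
(WS2) g.m.ideals of members are members; (WS3) if a g.m.ideal `B` of `A`
is in the class, then `A//B*` is in the class. -/
def IsGMWeaklySpecial (K : ∀ I₀ : Type u, GammaSystem.{u, v} I₀ → Prop) : Prop :=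
  (∀ (I₀ : Type u) (S : GammaSystem I₀), K I₀ S → IsSemiprimeRing (GMRing S)) ∧
  (∀ (I₀ : Type u) (S : GammaSystem I₀) (B : GMIdeal S), K I₀ S → K I₀ B.toSystem) ∧
  (∀ (I₀ : Type u) (S : GammaSystem I₀) (B : GMIdeal S),
      K I₀ B.toSystem → K I₀ B.ann.quotSystem)

/-- A g.m.special class: (S1) every member is a prime ring;
(S2) g.m.ideals of members are members; (S3) if a g.m.ideal `B` of `A`
is in the class, then `A//B*` is in the class. -/
def IsGMSpecial (K : ∀ I₀ : Type u, GammaSystem.{u, v} I₀ → Prop) : Prop :=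
  (∀ (I₀ : Type u) (S : GammaSystem I₀), K I₀ S → IsPrimeRing (GMRing S)) ∧
  (∀ (I₀ : Type u) (S : GammaSystem I₀) (B : GMIdeal S), K I₀ S → K I₀ B.toSystem) ∧
  (∀ (I₀ : Type u) (S : GammaSystem I₀) (B : GMIdeal S),
      K I₀ B.toSystem → K I₀ B.ann.quotSystem)

end RadicalTheory

section RingClasses

/-- A weakly special class of (possibly non-unital) rings: members are
semiprime, two-sided ideals of members are members (as rings), and if a
two-sided ideal `B` of `A` is a member then `A/B*` is a member. -/
def IsWeaklySpecialRingClass (K : ∀ (R : Type w) [NonUnitalRing R], Prop) : Prop :=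
  (∀ (R : Type w) [NonUnitalRing R], K R → IsSemiprimeRing R) ∧
  (∀ (R : Type w) [NonUnitalRing R] (B : TwoSidedIdeal R), K R → K B) ∧
  (∀ (R : Type w) [NonUnitalRing R] (B : TwoSidedIdeal R),
      K B → K B.annihilator.ringCon.Quotient)

/-- A special class of rings: a weakly special class all of whose members are
prime rings. -/
def IsSpecialRingClass (K : ∀ (R : Type w) [NonUnitalRing R], Prop) : Prop :=
  (∀ (R : Type w) [NonUnitalRing R], K R → IsPrimeRing R) ∧
  (∀ (R : Type w) [NonUnitalRing R] (B : TwoSidedIdeal R), K R → K B) ∧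
  (∀ (R : Type w) [NonUnitalRing R] (B : TwoSidedIdeal R),
      K B → K B.annihilator.ringCon.Quotient)

/-- The (upper) radical of the ring `R` determined by a class `K` of rings:
the intersection of all two-sided ideals `B` with `R/B ∈ K`. -/
def ringRadical (K : ∀ (R : Type w) [NonUnitalRing R], Prop)
    (R : Type w) [NonUnitalRing R] : Set R :=
  { x | ∀ B : TwoSidedIdeal R, K B.ringCon.Quotient → x ∈ B }

/-- A radical property of rings: closure under surjective homomorphic images,
existence of a largest `r`-ideal, and `r`-semisimplicity of the quotient by it. -/
def IsRingRadicalProperty (K : ∀ (R : Type w) [NonUnitalRing R], Prop) : Prop :=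
  (∀ (R S : Type w) [NonUnitalRing R] [NonUnitalRing S] (f : R →ₙ+* S),
      Function.Surjective f → K R → K S) ∧
  (∀ (R : Type w) [NonUnitalRing R], ∃ B : TwoSidedIdeal R,
      K B ∧ (∀ C : TwoSidedIdeal R, K C → C ≤ B) ∧
      ∀ D : TwoSidedIdeal B.ringCon.Quotient, K D → D = ⊥)

end RingClasses

/-- An ideal of the `A_{ts}`-ring `A_{st}` (a `Γ`-ring with `M = A_{st}`,
`Γ = A_{ts}`): an additive subgroup `B` with `B·A_{ts}·A_{st} ⊆ B` and
`A_{st}·A_{ts}·B ⊆ B`. -/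
structure GammaIdeal (S : GammaSystem I) (s t : I) where
  carrier : AddSubgroup (S.A s t)
  mul_mem_right : ∀ b ∈ carrier, ∀ (u : S.A t s) (y : S.A s t),
    S.mul (S.mul b u) y ∈ carrier
  mul_mem_left : ∀ (x : S.A s t) (u : S.A t s), ∀ b ∈ carrier,
    S.mul (S.mul x u) b ∈ carrier

/-!
The Baer radical of any ring is its set of m-nilpotent elements: if `x ∉ P` with `P` prime, then
`x u x ∉ P` for some `u`, which builds an m-sequence avoiding `P`; conversely an ideal maximal among
those avoiding a nonzero m-sequence is prime.

In the g.m.ring every prime ideal `P` is componentwise: for `x ∈ P` and `y = e_{ij}(x_{ij})`,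
`y u y w y = y e_{ji}(u_{ji}) x e_{ji}(w_{ji}) y ∈ P`, and primeness applied twice gives `y ∈ P`.
Since `A//B` is the quotient ring of `A` by the carrier of `B`, the prime g.m.ideals are then
exactly the componentwise prime ideals, so `\bar r_b(A) = r_b(A)`; the components of `r_b(A)` form
a g.m.ideal containing every g.m.ideal whose elements are m-nilpotent.
-/

section BaerRadical

variable {R : Type*} [NonUnitalRing R]

def TwoSidedIdeal.colon (P B : TwoSidedIdeal R) : TwoSidedIdeal R :=
  .mk' {c | ∀ b ∈ B, b * c ∈ P} (fun b _ => by rw [mul_zero]; exact P.zero_mem)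
    (fun hx hy b hb => by rw [mul_add]; exact P.add_mem (hx b hb) (hy b hb))
    (fun hx b hb => by rw [mul_neg]; exact P.neg_mem (hx b hb))
    (fun {x _} hy b hb => by rw [← mul_assoc]; exact hy _ (B.mul_mem_right b x hb))
    (fun {_ y} hx b hb => by rw [← mul_assoc]; exact P.mul_mem_right _ y (hx b hb))

lemma TwoSidedIdeal.mem_colon {P B : TwoSidedIdeal R} {c : R} :
    c ∈ P.colon B ↔ ∀ b ∈ B, b * c ∈ P :=
  TwoSidedIdeal.mem_mk' _ _ _ _ _ _ c

namespace TwoSidedIdeal.IsPrimeIdeal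

variable {P : TwoSidedIdeal R}

lemma mem_of_forall_mul_mul_mem (hP : P.IsPrimeIdeal) {a : R} (h : ∀ u, a * u * a ∈ P) :
    a ∈ P := by
  -- `B = (a)` satisfies `B R B ⊆ P`; primeness for `B, P : B` and then for `B, B` gives `B ≤ P`.
  set B := TwoSidedIdeal.span {a}
  have hBa : ∀ x ∈ B, ∀ r, x * r * a ∈ P := by
    intro x hx
    induction hx using TwoSidedIdeal.span_induction with
    | mem x hx => rw [Set.mem_singleton_iff.mp hx]; exact h
    | zero => intro r; rw [zero_mul, zero_mul]; exact P.zero_mem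
    | add x y _ _ hx hy => intro r; rw [add_mul, add_mul]; exact P.add_mem (hx r) (hy r)
    | neg x _ hx => intro r; rw [neg_mul, neg_mul]; exact P.neg_mem (hx r)
    | left_absorb s x _ hx =>
      intro r; rw [mul_assoc s, mul_assoc s]; exact P.mul_mem_left _ _ (hx r)
    | right_absorb s x _ hx => intro r; rw [mul_assoc x s]; exact hx (s * r)
  have hBB : ∀ z ∈ B, ∀ x ∈ B, ∀ r, x * r * z ∈ P := by
    intro z hz
    induction hz using TwoSidedIdeal.span_induction with
    | mem z hz => rw [Set.mem_singleton_iff.mp hz]; exact hBa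
    | zero => intro x _ r; rw [mul_zero]; exact P.zero_mem
    | add z w _ _ hz hw => intro x hx r; rw [mul_add]; exact P.add_mem (hz x hx r) (hw x hx r)
    | neg z _ hz => intro x hx r; rw [mul_neg]; exact P.neg_mem (hz x hx r)
    | left_absorb s z _ hz => intro x hx r; rw [← mul_assoc, mul_assoc x]; exact hz x hx (r * s)
    | right_absorb s z _ hz =>
      intro x hx r; rw [← mul_assoc]; exact P.mul_mem_right _ _ (hz x hx r)
  have hB : B ≤ P := by
    refine (hP B (P.colon B) fun b hb c hc => ?_).elim id fun hcolon => ?_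
    · exact mem_colon.mp hc b hb
    · refine (hP B B fun b hb c hc => hcolon (mem_colon.mpr fun x hx => ?_)).elim id id
      rw [← mul_assoc]
      exact hBB c hc x hx b
  exact hB (TwoSidedIdeal.subset_span rfl)

lemma exists_mul_mul_notMem (hP : P.IsPrimeIdeal) {a : R} (ha : a ∉ P) :
    ∃ u, a * u * a ∉ P := by
  by_contra! h
  exact ha (hP.mem_of_forall_mul_mul_mem h)

end TwoSidedIdeal.IsPrimeIdeal

lemma IsMNilpotent.mem_of_isPrimeIdeal {x : R} (hx : IsMNilpotent x) {P : TwoSidedIdeal R}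
    (hP : P.IsPrimeIdeal) : x ∈ P := by
  by_contra hxP
  choose! u hu using fun y (hy : y ∉ P) => hP.exists_mul_mul_notMem hy
  set a : ℕ → R := fun n => (fun y => y * u y * y)^[n] x
  have ha : ∀ n, a (n + 1) = a n * u (a n) * a n := fun n =>
    Function.iterate_succ_apply' _ n x
  have haP : ∀ n, a n ∉ P := by
    intro n
    induction n with
    | zero => exact hxP
    | succ n ih => rw [ha]; exact hu _ ih
  obtain ⟨k, hk⟩ := hx a rfl fun n => ⟨u (a n), ha n⟩
  exact haP k (hk ▸ P.zero_mem)

lemma IsMNilpotent.mem_baerRadical {x : R} (hx : IsMNilpotent x) : x ∈ baerRadical R :=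
  fun _ hP => hx.mem_of_isPrimeIdeal hP

lemma TwoSidedIdeal.mem_sSup_of_isChain {c : Set (TwoSidedIdeal R)} (hc : IsChain (· ≤ ·) c)
    (hne : c.Nonempty) {x : R} : x ∈ sSup c ↔ ∃ J ∈ c, x ∈ J := by
  refine ⟨fun hx => ?_, fun ⟨J, hJ, hxJ⟩ => le_sSup hJ hxJ⟩
  let U : TwoSidedIdeal R := .mk' {x | ∃ J ∈ c, x ∈ J}
    (hne.imp fun J hJ => ⟨hJ, J.zero_mem⟩)
    (fun ⟨J, hJ, hxJ⟩ ⟨K, hK, hyK⟩ => (hc.total hJ hK).elim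
      (fun h => ⟨K, hK, K.add_mem (h hxJ) hyK⟩) fun h => ⟨J, hJ, J.add_mem hxJ (h hyK)⟩)
    (fun ⟨J, hJ, hxJ⟩ => ⟨J, hJ, J.neg_mem hxJ⟩)
    (fun ⟨J, hJ, hyJ⟩ => ⟨J, hJ, J.mul_mem_left _ _ hyJ⟩)
    (fun ⟨J, hJ, hxJ⟩ => ⟨J, hJ, J.mul_mem_right _ _ hxJ⟩)
  have hU : sSup c ≤ U := sSup_le fun J hJ y hy => (mem_mk' _ _ _ _ _ _ y).mpr ⟨J, hJ, hy⟩
  exact (mem_mk' _ _ _ _ _ _ x).mp (hU hx)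

lemma TwoSidedIdeal.mul_mul_mem_of_mem_sup {P B C : TwoSidedIdeal R}
    (hBC : ∀ b ∈ B, ∀ c ∈ C, b * c ∈ P) {y z : R} (hy : y ∈ P ⊔ B) (hz : z ∈ P ⊔ C) (u : R) :
    y * u * z ∈ P := by
  obtain ⟨p, hp, b, hb, rfl⟩ := TwoSidedIdeal.mem_sup.mp hy
  obtain ⟨q, hq, c, hc, rfl⟩ := TwoSidedIdeal.mem_sup.mp hz
  simp only [add_mul, mul_add]
  exact P.add_mem (P.add_mem (P.mul_mem_right _ _ (P.mul_mem_right _ _ hp))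
      (P.mul_mem_left _ _ hq))
    (P.add_mem (P.mul_mem_right _ _ (P.mul_mem_right _ _ hp))
      (hBC _ (B.mul_mem_right _ _ hb) c hc))

lemma mSequence_mem_of_le {a : ℕ → R} (ha : ∀ n, ∃ u, a (n + 1) = a n * u * a n)
    {J : TwoSidedIdeal R} {n m : ℕ} (hnm : n ≤ m) (hn : a n ∈ J) : a m ∈ J := by
  induction m, hnm using Nat.le_induction with
  | base => exact hn
  | succ m _ ih =>
    obtain ⟨u, hu⟩ := ha m
    rw [hu]
    exact J.mul_mem_right _ _ (J.mul_mem_right _ _ ih)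

lemma exists_isPrimeIdeal_forall_notMem {a : ℕ → R} (ha : ∀ n, ∃ u, a (n + 1) = a n * u * a n)
    (hne : ∀ n, a n ≠ 0) : ∃ P : TwoSidedIdeal R, P.IsPrimeIdeal ∧ ∀ n, a n ∉ P := by
  obtain ⟨P, -, hPmax⟩ := zorn_le_nonempty₀ {J : TwoSidedIdeal R | ∀ n, a n ∉ J}
    (fun c hcS hc J hJ => ⟨sSup c, fun n hn => by
      obtain ⟨K, hK, hnK⟩ := (TwoSidedIdeal.mem_sSup_of_isChain hc ⟨J, hJ⟩).mp hn
      exact hcS hK n hnK, fun _ => le_sSup⟩)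
    ⊥ fun n hn => hne n ((TwoSidedIdeal.mem_bot R).mp hn)
  refine ⟨P, fun B C hBC => ?_, hPmax.prop⟩
  by_contra! hBC'
  have enter : ∀ D : TwoSidedIdeal R, ¬ D ≤ P → ∃ n, a n ∈ P ⊔ D := by
    intro D hD
    by_contra! h
    exact hD (le_sup_right.trans (hPmax.le_of_ge h le_sup_left))
  obtain ⟨n, hn⟩ := enter B hBC'.1
  obtain ⟨m, hm⟩ := enter C hBC'.2
  obtain ⟨u, hu⟩ := ha (max n m)
  refine hPmax.prop (max n m + 1) ?_
  rw [hu]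
  exact TwoSidedIdeal.mul_mul_mem_of_mem_sup hBC (mSequence_mem_of_le ha (le_max_left n m) hn)
    (mSequence_mem_of_le ha (le_max_right n m) hm) u

lemma isMNilpotent_of_mem_baerRadical {x : R} (hx : x ∈ baerRadical R) : IsMNilpotent x := by
  intro a ha0 ha
  by_contra! hne
  obtain ⟨P, hP, haP⟩ := exists_isPrimeIdeal_forall_notMem ha hne
  exact haP 0 (ha0 ▸ hx P hP)

lemma IsMNilpotent.isMNilpotentIn {x : R} (hx : IsMNilpotent x) (T : Set R) :
    IsMNilpotentIn T x :=
  fun a _ ha0 ha => hx a ha0 fun n => (ha n).imp fun _ hu => hu.2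

lemma IsMNilpotentIn.isMNilpotent {J : TwoSidedIdeal R} {x : R} (hx : x ∈ J)
    (h : IsMNilpotentIn (J : Set R) x) : IsMNilpotent x := by
  intro a ha0 ha
  choose u hu using ha
  have haJ : ∀ n, a n ∈ J := by
    intro n
    induction n with
    | zero => exact ha0 ▸ hx
    | succ n ih => rw [hu]; exact J.mul_mem_right _ _ (J.mul_mem_right _ _ ih)
  -- the even terms form an m-sequence with multipliers `u₂ₙ a₂ₙ u₂ₙ₊₁ a₂ₙ u₂ₙ ∈ J`
  obtain ⟨k, hk⟩ := h (fun n => a (2 * n)) (fun n => haJ _) ha0 fun n =>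
    ⟨u (2 * n) * a (2 * n) * u (2 * n + 1) * a (2 * n) * u (2 * n),
      J.mul_mem_right _ _ (J.mul_mem_left _ _ (haJ _)), by
        simp only [show 2 * (n + 1) = 2 * n + 1 + 1 by ring, hu, mul_assoc]⟩
  exact ⟨2 * k, hk⟩

variable (R) in
def baerRadicalIdeal : TwoSidedIdeal R :=
  sInf {P | P.IsPrimeIdeal}

variable (R) in
lemma coe_baerRadicalIdeal : (baerRadicalIdeal R : Set R) = baerRadical R :=
  Set.ext fun _ => TwoSidedIdeal.mem_sInf R

end BaerRadical

section Surjective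

variable {R R' : Type*} [NonUnitalRing R] [NonUnitalRing R'] {f : R →ₙ+* R'}

lemma TwoSidedIdeal.mem_map_of_surjective (hf : Function.Surjective f)
    {B : TwoSidedIdeal R} {y : R'} : y ∈ B.map f ↔ ∃ x ∈ B, f x = y := by
  refine ⟨fun hy => ?_, fun ⟨x, hx, hxy⟩ => subset_span ⟨x, hx, hxy⟩⟩
  induction hy using TwoSidedIdeal.span_induction with
  | mem y hy => exact hy
  | zero => exact ⟨0, B.zero_mem, map_zero f⟩
  | add y z _ _ hy hz =>
    obtain ⟨x, hx, rfl⟩ := hy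
    obtain ⟨w, hw, rfl⟩ := hz
    exact ⟨x + w, B.add_mem hx hw, map_add f x w⟩
  | neg y _ hy =>
    obtain ⟨x, hx, rfl⟩ := hy
    exact ⟨-x, B.neg_mem hx, map_neg f x⟩
  | left_absorb r y _ hy =>
    obtain ⟨x, hx, rfl⟩ := hy
    obtain ⟨s, rfl⟩ := hf r
    exact ⟨s * x, B.mul_mem_left _ _ hx, map_mul f s x⟩
  | right_absorb r y _ hy =>
    obtain ⟨x, hx, rfl⟩ := hy
    obtain ⟨s, rfl⟩ := hf r
    exact ⟨x * s, B.mul_mem_right _ _ hx, map_mul f x s⟩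

lemma isPrimeIdeal_ker_iff_isPrimeRing (hf : Function.Surjective f) :
    (TwoSidedIdeal.ker f).IsPrimeIdeal ↔ IsPrimeRing R' := by
  have eq_bot_of_comap_le_ker {B' : TwoSidedIdeal R'} (h : TwoSidedIdeal.comap f B' ≤ .ker f) :
      B' = ⊥ := by
    refine eq_bot_iff.mpr fun y hy => ?_
    obtain ⟨x, rfl⟩ := hf y
    exact (TwoSidedIdeal.mem_ker f).mp (h ((TwoSidedIdeal.mem_comap f).mpr hy))
  have le_ker_of_map_eq_bot {B : TwoSidedIdeal R} (h : B.map f = ⊥) : B ≤ .ker f :=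
    fun x hx => (TwoSidedIdeal.mem_ker f).mpr <| (TwoSidedIdeal.mem_bot R').mp <|
      h ▸ (TwoSidedIdeal.mem_map_of_surjective hf).mpr ⟨x, hx, rfl⟩
  constructor
  · intro hker B' C' hBC
    refine (hker _ _ fun b hb c hc => ?_).imp eq_bot_of_comap_le_ker eq_bot_of_comap_le_ker
    rw [TwoSidedIdeal.mem_ker, map_mul]
    exact hBC _ ((TwoSidedIdeal.mem_comap f).mp hb) _ ((TwoSidedIdeal.mem_comap f).mp hc)
  · intro hR B C hBC
    refine (hR (B.map f) (C.map f) fun b hb c hc => ?_).imp le_ker_of_map_eq_bot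
      le_ker_of_map_eq_bot
    obtain ⟨x, hx, rfl⟩ := (TwoSidedIdeal.mem_map_of_surjective hf).mp hb
    obtain ⟨y, hy, rfl⟩ := (TwoSidedIdeal.mem_map_of_surjective hf).mp hc
    rw [← map_mul]
    exact (TwoSidedIdeal.mem_ker f).mp (hBC x hx y hy)

end Surjective

open Classical

namespace GammaSystem

variable (S : GammaSystem I)

lemma single_mul_single (i j k : I) (a : S.A i j) (b : S.A j k) :
    (DFinsupp.single (i, j) a : GMRing S) * DFinsupp.single (j, k) b =
      DFinsupp.single (i, k) (S.mul a b) := by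
  change S.gmul _ _ = _
  rw [S.gmul_single_single, dif_pos rfl]
  rfl

lemma single_mul_single_of_ne {i j k l : I} (h : j ≠ k) (a : S.A i j) (b : S.A k l) :
    (DFinsupp.single (i, j) a : GMRing S) * DFinsupp.single (k, l) b = 0 := by
  change S.gmul _ _ = _
  rw [S.gmul_single_single, dif_neg h]

lemma single_mul_mul_single (i j k l : I) (a : S.A i j) (u : GMRing S) (b : S.A k l) :
    (DFinsupp.single (i, j) a : GMRing S) * u * DFinsupp.single (k, l) b =
      DFinsupp.single (i, l) (S.mul (S.mul a (u (j, k))) b) := by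
  induction u using DFinsupp.induction with
  | h0 => rw [mul_zero, zero_mul, DFinsupp.zero_apply, S.mul_zero', S.zero_mul',
      DFinsupp.single_zero]
  | ha q w f _ _ ih =>
    rw [_root_.mul_add, _root_.add_mul, ih, DFinsupp.add_apply, S.mul_add, S.add_mul,
      DFinsupp.single_add]
    congr 1
    obtain ⟨p, q⟩ := q
    by_cases hjp : j = p
    · subst hjp
      rw [single_mul_single]
      by_cases hqk : q = k
      · subst hqk
        rw [single_mul_single, DFinsupp.single_eq_same]
      · rw [single_mul_single_of_ne S hqk, DFinsupp.single_eq_of_ne (by simp [Ne.symm hqk]),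
          S.mul_zero', S.zero_mul', DFinsupp.single_zero]
    · rw [single_mul_single_of_ne S hjp, zero_mul, DFinsupp.single_eq_of_ne (by simp [hjp]),
        S.mul_zero', S.zero_mul', DFinsupp.single_zero]

end GammaSystem

namespace GMHom

variable {S T : GammaSystem I} (ψ : GMHom S T)

def toAddMonoidHom (i j : I) : S.A i j →+ T.A i j := AddMonoidHom.mk' (ψ.f i j) ψ.map_add

noncomputable def mapRange : GMRing S →+ GMRing T :=
  DFinsupp.mapRange.addMonoidHom fun p => ψ.toAddMonoidHom p.1 p.2

lemma mapRange_single (p : I × I) (a : S.A p.1 p.2) :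
    ψ.mapRange (DFinsupp.single p a) = DFinsupp.single p (ψ.f p.1 p.2 a) :=
  DFinsupp.mapRange_single (hf := fun _ => map_zero _)

lemma mapRange_single_mul_single (p q : I × I) (a : S.A p.1 p.2) (b : S.A q.1 q.2) :
    ψ.mapRange (DFinsupp.single p a * DFinsupp.single q b) =
      ψ.mapRange (DFinsupp.single p a) * ψ.mapRange (DFinsupp.single q b) := by
  obtain ⟨i, j⟩ := p
  obtain ⟨k, l⟩ := q
  rw [ψ.mapRange_single, ψ.mapRange_single]
  by_cases hjk : j = k
  · subst hjk
    rw [S.single_mul_single, T.single_mul_single, ψ.mapRange_single, ψ.map_mul]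
  · rw [S.single_mul_single_of_ne hjk, T.single_mul_single_of_ne hjk, map_zero]

lemma mapRange_mul (x y : GMRing S) : ψ.mapRange (x * y) = ψ.mapRange x * ψ.mapRange y := by
  induction x using DFinsupp.induction with
  | h0 => rw [zero_mul, map_zero, zero_mul]
  | ha p a f _ _ ihx =>
    rw [add_mul, _root_.map_add, _root_.map_add, add_mul, ihx]
    congr 1
    clear ihx
    induction y using DFinsupp.induction with
    | h0 => rw [mul_zero, map_zero, mul_zero]
    | ha q b g _ _ ihy =>
      rw [mul_add, _root_.map_add, _root_.map_add, mul_add, ihy,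
        ψ.mapRange_single_mul_single]

noncomputable def toNonUnitalRingHom : GMRing S →ₙ+* GMRing T :=
  { ψ.mapRange with map_mul' := ψ.mapRange_mul }

lemma toNonUnitalRingHom_surjective (hψ : ψ.Surjective) :
    Function.Surjective ψ.toNonUnitalRingHom :=
  (DFinsupp.mapRange_surjective _ fun _ => map_zero _).mpr fun p => hψ p.1 p.2

end GMHom

namespace GMIdeal

variable {S : GammaSystem I}

section ToTwoSidedIdeal

variable (N : GMIdeal S)

def mkGMHom : GMHom S N.quotSystem where
  f _ _ := QuotientAddGroup.mk
  map_add _ _ := rfl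
  map_mul _ _ := rfl

noncomputable def toTwoSidedIdeal : TwoSidedIdeal (GMRing S) :=
  TwoSidedIdeal.ker N.mkGMHom.toNonUnitalRingHom

lemma mem_toTwoSidedIdeal {x : GMRing S} : x ∈ N.toTwoSidedIdeal ↔ x ∈ N.carrier := by
  rw [toTwoSidedIdeal, TwoSidedIdeal.mem_ker, DFinsupp.ext_iff]
  exact forall_congr' fun p => QuotientAddGroup.eq_zero_iff (x p)

lemma coe_toTwoSidedIdeal : (N.toTwoSidedIdeal : Set (GMRing S)) = N.carrier :=
  Set.ext fun _ => N.mem_toTwoSidedIdeal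

lemma isPrimeRing_quotSystem_iff :
    IsPrimeRing (GMRing N.quotSystem) ↔ N.toTwoSidedIdeal.IsPrimeIdeal :=
  (isPrimeIdeal_ker_iff_isPrimeRing
    (N.mkGMHom.toNonUnitalRingHom_surjective fun _ _ => QuotientAddGroup.mk_surjective)).symm

lemma single_mem_carrier {i j : I} {a : S.A i j} (ha : a ∈ N.B i j) :
    (DFinsupp.single (i, j) a : GMRing S) ∈ N.carrier := by
  intro p
  by_cases hp : p = (i, j)
  · subst hp
    rwa [DFinsupp.single_eq_same]
  · rw [DFinsupp.single_eq_of_ne hp]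
    exact zero_mem _

end ToTwoSidedIdeal

lemma IsBaerGMIdeal.carrier_subset_baerRadical {M : GMIdeal S} (hM : M.IsBaerGMIdeal) :
    M.carrier ⊆ baerRadical (GMRing S) := fun x hx =>
  (IsMNilpotentIn.isMNilpotent (M.mem_toTwoSidedIdeal.mpr hx)
    (M.coe_toTwoSidedIdeal ▸ hM x hx)).mem_baerRadical

def ofTwoSidedIdeal (J : TwoSidedIdeal (GMRing S)) : GMIdeal S where
  B i j :=
    { carrier := {a | DFinsupp.single (i, j) a ∈ J}
      zero_mem' := by rw [Set.mem_ofPred_eq, DFinsupp.single_zero]; exact J.zero_mem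
      add_mem' := fun ha hb => by
        rw [Set.mem_ofPred_eq, DFinsupp.single_add]; exact J.add_mem ha hb
      neg_mem' := fun ha => by
        rw [Set.mem_ofPred_eq, DFinsupp.single_neg]; exact J.neg_mem ha }
  mul_mem_right x z hx := by
    change DFinsupp.single _ _ ∈ J
    rw [← S.single_mul_single]
    exact J.mul_mem_right _ _ hx
  mul_mem_left x z hz := by
    change DFinsupp.single _ _ ∈ J
    rw [← S.single_mul_single]
    exact J.mul_mem_left _ _ hz

variable {J : TwoSidedIdeal (GMRing S)}

lemma mem_ofTwoSidedIdeal {i j : I} {a : S.A i j} :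
    a ∈ (ofTwoSidedIdeal J).B i j ↔ DFinsupp.single (i, j) a ∈ J :=
  Iff.rfl

lemma carrier_ofTwoSidedIdeal_subset : (ofTwoSidedIdeal J).carrier ⊆ J := fun x hx => by
  rw [← DFinsupp.sum_single (f := x)]
  exact J.dfinsuppSum_mem _ fun p _ => hx p

lemma carrier_ofTwoSidedIdeal
    (hJ : ∀ x ∈ J, ∀ i j : I, (DFinsupp.single (i, j) (x (i, j)) : GMRing S) ∈ J) :
    (ofTwoSidedIdeal J).carrier = J :=
  carrier_ofTwoSidedIdeal_subset.antisymm fun x hx p => hJ x hx p.1 p.2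

end GMIdeal

lemma TwoSidedIdeal.IsPrimeIdeal.single_apply_mem {S : GammaSystem I}
    {P : TwoSidedIdeal (GMRing S)} (hP : P.IsPrimeIdeal) {x : GMRing S} (hx : x ∈ P) (i j : I) :
    (DFinsupp.single (i, j) (x (i, j)) : GMRing S) ∈ P := by
  set y : GMRing S := DFinsupp.single (i, j) (x (i, j))
  -- `y u y w y` only sees `u_{ji}` and `w_{ji}`, so it is `y e_{ji}(u_{ji}) x e_{ji}(w_{ji}) y`
  have hyuywy : ∀ u w, y * u * y * w * y ∈ P := by
    intro u w
    have : y * u * y * w * y = y * (DFinsupp.single (j, i) (u (j, i)) * x *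
        DFinsupp.single (j, i) (w (j, i))) * y := by
      simp only [y, S.single_mul_mul_single, DFinsupp.single_eq_same, S.mul_assoc]
    rw [this]
    exact P.mul_mem_right _ _ (P.mul_mem_left _ _ (P.mul_mem_right _ _ (P.mul_mem_left _ _ hx)))
  refine hP.mem_of_forall_mul_mul_mem fun u => hP.mem_of_forall_mul_mul_mem fun w => ?_
  have : y * u * y * w * (y * u * y) = y * u * y * w * y * u * y := by noncomm_ring
  rw [this]
  exact P.mul_mem_right _ _ (P.mul_mem_right _ _ (hyuywy u w))

lemma GMIdeal.toTwoSidedIdeal_ofTwoSidedIdeal {S : GammaSystem I} {P : TwoSidedIdeal (GMRing S)}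
    (hP : P.IsPrimeIdeal) : (ofTwoSidedIdeal P).toTwoSidedIdeal = P :=
  SetLike.coe_injective <| (coe_toTwoSidedIdeal _).trans <|
    carrier_ofTwoSidedIdeal fun _ hx => hP.single_apply_mem hx

section BaerGMIdeal

variable (S : GammaSystem I)

noncomputable def baerGMIdeal : GMIdeal S :=
  .ofTwoSidedIdeal (baerRadicalIdeal (GMRing S))

lemma carrier_baerGMIdeal : (baerGMIdeal S).carrier = baerRadical (GMRing S) := by
  rw [baerGMIdeal, GMIdeal.carrier_ofTwoSidedIdeal, coe_baerRadicalIdeal]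
  intro x hx i j
  rw [← SetLike.mem_coe, coe_baerRadicalIdeal] at hx ⊢
  exact fun P hP => hP.single_apply_mem (hx P hP) i j

lemma isBaerGMIdeal_baerGMIdeal : (baerGMIdeal S).IsBaerGMIdeal := fun _ hx =>
  (isMNilpotent_of_mem_baerRadical (carrier_baerGMIdeal S ▸ hx)).isMNilpotentIn _

lemma GMIdeal.IsBaerGMIdeal.le_baerGMIdeal {M : GMIdeal S} (hM : M.IsBaerGMIdeal) (i j : I) :
    M.B i j ≤ (baerGMIdeal S).B i j := fun _ ha => by
  rw [baerGMIdeal, GMIdeal.mem_ofTwoSidedIdeal, ← SetLike.mem_coe, coe_baerRadicalIdeal]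
  exact hM.carrier_subset_baerRadical (M.single_mem_carrier ha)

lemma gmBarBaer_eq_baerRadical : gmBarBaer S = baerRadical (GMRing S) := by
  ext x
  constructor
  · intro hx P hP
    have hprime : IsPrimeRing (GMRing (GMIdeal.ofTwoSidedIdeal P).quotSystem) := by
      rwa [GMIdeal.isPrimeRing_quotSystem_iff, GMIdeal.toTwoSidedIdeal_ofTwoSidedIdeal hP]
    rw [← SetLike.mem_coe, ← GMIdeal.carrier_ofTwoSidedIdeal fun _ hy => hP.single_apply_mem hy]
    exact hx _ hprime
  · intro hx B hB
    exact B.mem_toTwoSidedIdeal.mp (hx _ (B.isPrimeRing_quotSystem_iff.mp hB))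

end BaerGMIdeal

/-- **Theorem 3.4.** `\bar r_b(A) = g.m.r_b(A) = r_b(A)`: the componentwise
intersection of all prime g.m.ideals of `A` equals the largest g.m.ideal `N`
of `A` all of whose elements are `m`-nilpotent in the ring `N`, and both
equal the Baer radical of the ring `A`. -/
theorem barBaer_eq_gmBaer_eq_baerRadical {I : Type u} (S : GammaSystem.{u, v} I) :
    ∃ N : GMIdeal S, N.IsBaerGMIdeal ∧
      (∀ M : GMIdeal S, M.IsBaerGMIdeal → ∀ i j : I, M.B i j ≤ N.B i j) ∧
      N.carrier = gmBarBaer S ∧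
      N.carrier = baerRadical (GMRing S) :=
  ⟨baerGMIdeal S, isBaerGMIdeal_baerGMIdeal S, fun _ hM => hM.le_baerGMIdeal S,
    (carrier_baerGMIdeal S).trans (gmBarBaer_eq_baerRadical S).symm, carrier_baerGMIdeal S⟩
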